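/- Let T be a tensor of format m × n × p over a field K with slices T_1, …, T_p. Let T' be the tensor of format (m+n) × (m+n) × (p+1) whose first slice is the identity matrix I_{m+n} and whose remaining p slices are the block matrices A_i = [[0_{m×m}, T_i], [0_{n×m}, 0_{n×n}]]. Then rank(T') = rank(T) + m + n. -/

import Mathlib

open Matrix BigOperators

variable {K : Type*} [Field K]

/-- `T` equals the sum of `r` rank-one tensors with components `u i`, `v i`, `w i`. -/
def tensorDecomp {α β γ : Type*} [Fintype α] [Fintype β] [Fintype γ]
    (T : α → β → γ → K) (r : ℕ)
    (u : Fin r → α → K) (v : Fin r → β → K) (w : Fin r → γ → K) : Prop :=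
  ∀ i j k, T i j k = ∑ l, u l i * v l j * w l k

/-- The rank of a tensor: least number of rank-one summands. -/
noncomputable def tensorRank {α β γ : Type*} [Fintype α] [Fintype β] [Fintype γ]
    (T : α → β → γ → K) : ℕ :=
  sInf {r | ∃ u v w, tensorDecomp T r u v w}

/-- The `k`-th z-zSlice of a tensor. -/
def zSlice {α β : Type*} {p : ℕ} (T : α → β → Fin p → K) (k : Fin p) : Matrix α β K :=
  Matrix.of fun i j => T i j k

/-- A matrix is diagonalizable if it is similar over `K` to a diagonal matrix. -/
def Diagonalizable {ι : Type*} [Fintype ι] [DecidableEq ι] (M : Matrix ι ι K) : Prop :=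
  ∃ P : Matrix ι ι K, IsUnit P ∧ ∃ d : ι → K, M = P * Matrix.diagonal d * P⁻¹

/-!
Upper bound: a minimal decomposition of `T`, padded with zeros, together with the `m + n`
rank-one terms `e_a ⊗ e_a ⊗ e_0` of the identity slice, decomposes `T'`.

Lower bound: write a decomposition of `T'` slice-wise as `T'_k = xᵀ D_k y` with `D_k` diagonal.
Since `xᵀ D_0 y = 1`, the lower halves of some `n` rows of `x` are linearly independent, so for
a suitable `B` the rows of `x' = x [1; B]` vanish there. Still `x'ᵀ D_0 y_top = 1`, so the upper
halves of `m` rows of `y` at which `x'` does not vanish are independent, and `y' = y [C; 1]`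
vanishes on them for a suitable `C`. As `T'_{k+1} = [[0, T_k], [0, 0]]`, we get
`T_k = x'ᵀ D_{k+1} y'`: a decomposition of `T` with `m + n` zero terms.
-/

namespace Matrix

variable {ι κ κ' α β : Type*}

theorem exists_finset_rows_span_of_transpose_mul_eq_one [Fintype ι] [Fintype κ] [DecidableEq κ]
    {a b : Matrix ι κ K} (h : aᵀ * b = 1) :
    ∃ s : Finset ι, (∀ l ∈ s, a l ≠ 0) ∧ LinearIndepOn K b (s : Set ι) ∧
      ⊤ ≤ Submodule.span K (b '' s) := by
  classical
  have h' : bᵀ * a = 1 := by simpa using congrArg transpose h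
  have hspan : ⊤ ≤ Submodule.span K (b '' {l | a l ≠ 0}) := by
    intro v _
    have hv : v = ∑ l, (a *ᵥ v) l • b l := by
      rw [← vecMul_eq_sum, ← mulVec_transpose, mulVec_mulVec, h', one_mulVec]
    rw [hv]
    refine Submodule.sum_mem _ fun l _ => ?_
    by_cases hl : a l = 0
    · simp [mulVec, hl]
    · exact Submodule.smul_mem _ _ (Submodule.subset_span ⟨l, hl, rfl⟩)
  obtain ⟨s, hst, -, hsub, hli⟩ :=
    exists_linearIndepOn_extension (linearIndepOn_empty K b) (Set.empty_subset {l | a l ≠ 0})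
  refine ⟨s.toFinset, fun l hl => hst (by simpa using hl), by simpa using hli, ?_⟩
  simpa using hspan.trans (Submodule.span_le.mpr hsub)

theorem exists_finset_rows_add_mul_eq_zero [Fintype ι] [Fintype κ] [DecidableEq κ]
    {a b : Matrix ι κ K} (h : aᵀ * b = 1) (c : Matrix ι κ' K) :
    ∃ s : Finset ι, s.card = Fintype.card κ ∧ (∀ l ∈ s, a l ≠ 0) ∧
      ∃ B : Matrix κ κ' K, ∀ l ∈ s, (c + b * B) l = 0 := by
  obtain ⟨s, ha, hli, hspan⟩ := exists_finset_rows_span_of_transpose_mul_eq_one h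
  let basis := Module.Basis.mk hli (hspan.trans_eq (congrArg _ (Set.image_eq_range _ _)))
  refine ⟨s, ?_, ha, (LinearMap.toMatrix' (basis.constr K fun l => -c l))ᵀ, fun l hl => ?_⟩
  · simpa using (Module.finrank_eq_card_basis basis).symm
  · change c l + b l ᵥ* _ = 0
    have hb : basis ⟨l, hl⟩ = b l := Module.Basis.mk_apply ..
    rw [vecMul_transpose, LinearMap.toMatrix'_mulVec, ← hb, Module.Basis.constr_basis,
      add_neg_cancel]

theorem transpose_mul_diagonal_mul_apply [Fintype ι] [DecidableEq ι] (x : Matrix ι α K)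
    (y : Matrix ι β K) (d : ι → K) (i : α) (j : β) :
    (xᵀ * diagonal d * y) i j = ∑ l, x l i * y l j * d l := by
  rw [mul_apply]
  simp only [mul_diagonal, transpose_apply]
  exact Finset.sum_congr rfl fun l _ => by ring

theorem mul_fromRows_eq_add [Fintype α] [Fintype β] (x : Matrix ι (α ⊕ β) K)
    (P : Matrix α κ K) (Q : Matrix β κ K) :
    x * fromRows P Q = x.toCols₁ * P + x.toCols₂ * Q := by
  conv_lhs => rw [← fromCols_toCols x]
  exact fromCols_mul_fromRows ..

theorem toCols₁_eq_mul_fromRows [Fintype α] [Fintype β] [DecidableEq α]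
    (x : Matrix ι (α ⊕ β) K) :
    x.toCols₁ = x * fromRows (1 : Matrix α α K) (0 : Matrix β α K) := by
  simp [mul_fromRows_eq_add]

theorem toCols₂_eq_mul_fromRows [Fintype α] [Fintype β] [DecidableEq β]
    (x : Matrix ι (α ⊕ β) K) :
    x.toCols₂ = x * fromRows (0 : Matrix α β K) (1 : Matrix β β K) := by
  simp [mul_fromRows_eq_add]

theorem transpose_mul_mul_mul_mul [Fintype ι] [Fintype κ] [Fintype κ'] (x : Matrix ι κ K)
    (M : Matrix ι ι K) (y : Matrix ι κ' K) {μ ν : Type*} (P : Matrix κ μ K) (Q : Matrix κ' ν K) :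
    (x * P)ᵀ * M * (y * Q) = Pᵀ * (xᵀ * M * y) * Q := by
  simp only [transpose_mul, Matrix.mul_assoc]

end Matrix

section TensorRank

variable {α β γ ι : Type*} [Fintype α] [Fintype β] [Fintype γ] [Fintype ι]

theorem exists_tensorDecomp_card {T : α → β → γ → K} {x : ι → α → K} {y : ι → β → K}
    {z : ι → γ → K} (h : ∀ i j k, T i j k = ∑ l, x l i * y l j * z l k) :
    ∃ u v w, tensorDecomp T (Fintype.card ι) u v w := by
  let e := (Fintype.equivFin ι).symm
  exact ⟨x ∘ e, y ∘ e, z ∘ e, fun i j k => (h i j k).trans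
    (Equiv.sum_comp e fun l => x l i * y l j * z l k).symm⟩

theorem tensorRank_le_card {T : α → β → γ → K} {x : ι → α → K} {y : ι → β → K}
    {z : ι → γ → K} (h : ∀ i j k, T i j k = ∑ l, x l i * y l j * z l k) :
    tensorRank T ≤ Fintype.card ι :=
  Nat.sInf_le (exists_tensorDecomp_card h)

theorem exists_tensorDecomp_tensorRank (T : α → β → γ → K) :
    ∃ u v w, tensorDecomp T (tensorRank T) u v w := by
  classical
  refine Nat.sInf_mem (s := {r | ∃ u v w, tensorDecomp T r u v w}) ⟨_,
    exists_tensorDecomp_card (ι := β × γ) (x := fun l i => T i l.1 l.2)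
      (y := fun l => Pi.single l.1 1) (z := fun l => Pi.single l.2 1) fun i j k => ?_⟩
  simp [Fintype.sum_prod_type, Pi.single_apply]

theorem tensorRank_add_card_le {T : α → β → γ → K} {x : ι → α → K} {y : ι → β → K}
    {z : ι → γ → K} (h : ∀ i j k, T i j k = ∑ l, x l i * y l j * z l k) (s : Finset ι)
    (hs : ∀ l ∈ s, x l = 0 ∨ y l = 0) :
    tensorRank T + s.card ≤ Fintype.card ι := by
  classical
  have hsc : ∀ i j k, T i j k = ∑ l : ↥sᶜ, x l i * y l j * z l k := by
    intro i j k
    rw [h, Finset.sum_coe_sort sᶜ fun l => x l i * y l j * z l k, ← Finset.sum_compl_add_sum s,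
      add_eq_left]
    refine Finset.sum_eq_zero fun l hl => ?_
    rcases hs l hl with hx | hy <;> simp [*]
  have := tensorRank_le_card hsc
  rw [Fintype.card_coe, Finset.card_compl] at this
  have := s.card_le_univ
  omega

theorem tensorDecomp.transpose_mul_diagonal_mul {T : α → β → γ → K} {r : ℕ}
    {u : Matrix (Fin r) α K} {v : Matrix (Fin r) β K} {w : Fin r → γ → K}
    (h : tensorDecomp T r u v w) (k : γ) :
    uᵀ * diagonal (fun l => w l k) * v = of fun i j => T i j k := by
  ext i j
  rw [transpose_mul_diagonal_mul_apply, of_apply, h]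

end TensorRank

theorem tensorRank_le_tensorRank_add_card_add_card {α β : Type*} [Fintype α] [Fintype β]
    [DecidableEq α] [DecidableEq β] {p : ℕ} (T : α → β → Fin p → K)
    (T' : α ⊕ β → α ⊕ β → Fin (p + 1) → K)
    (h0 : ∀ i j, T' i j 0 = (1 : Matrix (α ⊕ β) (α ⊕ β) K) i j)
    (hsucc : ∀ i j (k : Fin p), T' i j k.succ = fromBlocks 0 (zSlice T k) 0 0 i j) :
    tensorRank T' ≤ tensorRank T + Fintype.card α + Fintype.card β := by
  obtain ⟨u, v, w, hd⟩ := exists_tensorDecomp_tensorRank T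
  refine (tensorRank_le_card (ι := Fin (tensorRank T) ⊕ (α ⊕ β))
    (x := Sum.elim (fun l => Sum.elim (u l) 0) fun a => Pi.single a 1)
    (y := Sum.elim (fun l => Sum.elim 0 (v l)) fun a => Pi.single a 1)
    (z := Sum.elim (fun l => Fin.cases 0 (w l)) fun _ => Pi.single 0 1) fun i j k => ?_).trans_eq
    (by simp [add_assoc])
  rw [Fintype.sum_sum_type]
  induction k using Fin.cases with
  | zero => simp [h0, Matrix.one_apply, Pi.single_apply]
  | succ k =>
    rcases i with i | i <;> rcases j with j | j <;> simp [hsucc, zSlice]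
    exact hd i j k

theorem tensorRank_add_card_add_card_le {α β ι : Type*} [Fintype α] [Fintype β] [Fintype ι]
    [DecidableEq ι] [DecidableEq α] [DecidableEq β] {p : ℕ} (T : α → β → Fin p → K)
    (x y : Matrix ι (α ⊕ β) K) (z : ι → Fin (p + 1) → K)
    (h0 : xᵀ * diagonal (fun l => z l 0) * y = 1)
    (hsucc : ∀ k, xᵀ * diagonal (fun l => z l k.succ) * y = fromBlocks 0 (zSlice T k) 0 0) :
    tensorRank T + Fintype.card α + Fintype.card β ≤ Fintype.card ι := by
  set D₀ : Matrix ι ι K := diagonal fun l => z l 0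
  have hG : (D₀ * y.toCols₂)ᵀ * x.toCols₂ = 1 := by
    have hyx : yᵀ * D₀ * x = 1 := by
      simpa [D₀, Matrix.mul_assoc] using congrArg transpose h0
    rw [transpose_mul, diagonal_transpose, toCols₂_eq_mul_fromRows x, toCols₂_eq_mul_fromRows y,
      transpose_mul_mul_mul_mul, hyx]
    simp [transpose_fromRows, fromCols_mul_fromRows]
  obtain ⟨G, hGcard, -, B, hB⟩ := exists_finset_rows_add_mul_eq_zero hG x.toCols₁
  obtain ⟨x', hx'⟩ : ∃ x' : Matrix ι α K, x * fromRows (1 : Matrix α α K) B = x' := ⟨_, rfl⟩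
  have hx'G : ∀ l ∈ G, x' l = 0 := by
    rwa [← hx', mul_fromRows_eq_add, Matrix.mul_one]
  have hH : (D₀ * x')ᵀ * y.toCols₁ = 1 := by
    rw [transpose_mul, diagonal_transpose, ← hx', toCols₁_eq_mul_fromRows y,
      transpose_mul_mul_mul_mul, h0]
    simp [transpose_fromRows, fromCols_mul_fromRows]
  obtain ⟨H, hHcard, hHx', C, hC⟩ := exists_finset_rows_add_mul_eq_zero hH y.toCols₂
  obtain ⟨y', hy'⟩ : ∃ y' : Matrix ι β K, y * fromRows C (1 : Matrix β β K) = y' := ⟨_, rfl⟩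
  have hy'H : ∀ l ∈ H, y' l = 0 := by
    rwa [← hy', mul_fromRows_eq_add, Matrix.mul_one, add_comm]
  have hdisj : Disjoint G H := by
    refine Finset.disjoint_left.mpr fun l hlG hlH => hHx' l hlH ?_
    funext j
    simp [D₀, diagonal_mul, congrFun (hx'G l hlG) j]
  have hslice : ∀ k, zSlice T k = x'ᵀ * diagonal (fun l => z l k.succ) * y' := fun k => by
    rw [← hx', ← hy', transpose_mul_mul_mul_mul, hsucc]
    simp [transpose_fromRows, fromCols_mul_fromBlocks, fromCols_mul_fromRows]
  have := tensorRank_add_card_le (T := T) (x := x') (y := y')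
    (z := fun l (k : Fin p) => z l k.succ)
    (fun i j k => by rw [← transpose_mul_diagonal_mul_apply, ← hslice]; rfl) (G ∪ H) ?_
  · rw [Finset.card_union_of_disjoint hdisj, hGcard, hHcard] at this
    omega
  · exact fun l hl => (Finset.mem_union.mp hl).imp (hx'G l) (hy'H l)

theorem shitov_padding_rank
    {m n p : ℕ} (T : Fin m → Fin n → Fin p → K)
    (T' : (Fin m ⊕ Fin n) → (Fin m ⊕ Fin n) → Fin (p + 1) → K)
    (h0 : ∀ i j, T' i j 0 = (1 : Matrix (Fin m ⊕ Fin n) (Fin m ⊕ Fin n) K) i j)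
    (hrest : ∀ i j (k : Fin p), T' i j k.succ = Matrix.fromBlocks 0 (zSlice T k) 0 0 i j) :
    tensorRank T' = tensorRank T + m + n := by
  refine le_antisymm ?_ ?_
  · simpa using tensorRank_le_tensorRank_add_card_add_card T T' h0 hrest
  · obtain ⟨x, y, z, hd⟩ := exists_tensorDecomp_tensorRank T'
    simpa using tensorRank_add_card_add_card_le T x y z
      (by rw [hd.transpose_mul_diagonal_mul]; ext; simp [h0])
      (fun k => by rw [hd.transpose_mul_diagonal_mul]; ext; simp [hrest])
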